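/- Let V be a finite-dimensional real normed vector space and U ⊆ V a nonempty open convex cone (i.e. U is open, convex, and t • u ∈ U for all t > 0 and u ∈ U) such that there exists a linear functional φ on V with φ(u) > 0 for every u ∈ closure(U) with u ≠ 0. Let v ∈ U and let (h_k) be a sequence of linear automorphisms of V with det(h_k) = 1 and h_k(U) = U for all k. If there exists w ∈ closure(U) \ U such that h_k(v)/‖h_k(v)‖ → w as k → ∞, then ‖h_k(v)‖ → +∞. -/

import Mathlib

noncomputable section

open Filter Topology

/-- If a sequence of volume-preserving automorphisms of a properly
convex open cone pushes the direction of a point of the cone to a boundary direction,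
then the norms blow up. -/
theorem stmt_18 {V : Type*} [NormedAddCommGroup V] [NormedSpace ℝ V]
    [FiniteDimensional ℝ V]
    (U : Set V) (hUne : U.Nonempty) (hUopen : IsOpen U) (hUconv : Convex ℝ U)
    (hUcone : ∀ t : ℝ, 0 < t → ∀ u ∈ U, t • u ∈ U)
    (φ : V →ₗ[ℝ] ℝ) (hφ : ∀ u ∈ closure U, u ≠ 0 → 0 < φ u)
    (v : V) (hv : v ∈ U)
    (h : ℕ → V ≃ₗ[ℝ] V)
    (hdet : ∀ k, LinearMap.det ((h k : V →ₗ[ℝ] V)) = 1)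
    (hU : ∀ k, (h k) '' U = U)
    (w : V) (hw : w ∈ closure U \ U)
    (hlim : Tendsto (fun k => ‖(h k) v‖⁻¹ • (h k) v) atTop (𝓝 w)) :
    Tendsto (fun k => ‖(h k) v‖) atTop atTop := by
  by_contra hcon
  have hwU : w ∈ closure U := hw.1
  have hwnU : w ∉ U := hw.2
  -- 0 is not in U
  have h0U : (0 : V) ∉ U := by
    intro h0
    have hwne : w ≠ 0 := fun hh => hwnU (hh ▸ h0)
    obtain ⟨δ, hδpos, hball⟩ := Metric.isOpen_iff.1 hUopen 0 h0
    have hwpos : 0 < ‖w‖ := norm_pos_iff.2 hwne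
    set t : ℝ := δ / (2 * ‖w‖) with ht
    have htpos : 0 < t := by positivity
    have hmem : -(t • w) ∈ U := by
      apply hball
      rw [Metric.mem_ball, dist_zero_right, norm_neg, norm_smul,
        Real.norm_eq_abs, abs_of_pos htpos]
      have heq : t * ‖w‖ = δ / 2 := by rw [ht]; field_simp
      rw [heq]; linarith
    have h1 : 0 < φ (-(t • w)) := by
      refine hφ _ (subset_closure hmem) ?_
      simp only [neg_ne_zero]
      exact smul_ne_zero (ne_of_gt htpos) hwne
    have h2 : 0 < φ w := hφ w hwU hwne
    rw [map_neg, map_smul, smul_eq_mul] at h1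
    nlinarith
  have hvne : v ≠ 0 := fun hh => h0U (hh ▸ hv)
  have hφ0 : ∀ u ∈ closure U, 0 ≤ φ u := by
    intro u hu
    rcases eq_or_ne u 0 with rfl | hune
    · simp
    · exact (hφ u hu hune).le
  -- closure U is stable under positive scaling
  have hclsmul : ∀ t : ℝ, 0 < t → ∀ u ∈ closure U, t • u ∈ closure U := by
    intro t ht u hu
    have h1 : (fun x : V => t • x) '' closure U ⊆ closure ((fun x : V => t • x) '' U) :=
      image_closure_subset_closure_image (continuous_const_smul t)
    have h2 : (fun x : V => t • x) '' U ⊆ U := by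
      rintro _ ⟨x, hx, rfl⟩; exact hUcone t ht x hx
    exact closure_mono h2 (h1 ⟨u, hu, rfl⟩)
  -- closure U is stable under each h k
  have hmapcl : ∀ k, ∀ u ∈ closure U, (h k) u ∈ closure U := by
    intro k u hu
    have hc : Continuous (h k) := ((h k : V →ₗ[ℝ] V)).continuous_of_finiteDimensional
    have h1 : (h k) '' closure U ⊆ closure ((h k) '' U) :=
      image_closure_subset_closure_image hc
    have := h1 ⟨u, hu, rfl⟩
    rwa [hU k] at this
  have hhv : ∀ k, (h k) v ∈ U := fun k => (hU k) ▸ ⟨v, hv, rfl⟩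
  have hhvne : ∀ k, ‖(h k) v‖ ≠ 0 := fun k =>
    norm_ne_zero_iff.2 (fun hh => h0U (hh ▸ hhv k))
  -- sharpness of the cone : φ dominates the norm on closure U
  obtain ⟨ε, hεpos, hε⟩ : ∃ ε : ℝ, 0 < ε ∧ ∀ u ∈ closure U, ε * ‖u‖ ≤ φ u := by
    have hS : IsCompact (closure U ∩ Metric.sphere (0 : V) 1) :=
      (isCompact_sphere (0 : V) 1).inter_left isClosed_closure
    have hvnorm : 0 < ‖v‖ := norm_pos_iff.2 hvne
    have hSne : (closure U ∩ Metric.sphere (0 : V) 1).Nonempty := by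
      refine ⟨‖v‖⁻¹ • v, hclsmul _ (by positivity) v (subset_closure hv), ?_⟩
      simp [norm_smul, abs_of_pos (inv_pos.2 hvnorm), inv_mul_cancel₀ (ne_of_gt hvnorm)]
    obtain ⟨u₀, hu₀S, hu₀min⟩ :=
      hS.exists_isMinOn hSne (φ.continuous_of_finiteDimensional).continuousOn
    have hu₀ne : u₀ ≠ 0 := by
      intro hh
      have := hu₀S.2
      rw [hh] at this
      simp at this
    refine ⟨φ u₀, hφ u₀ hu₀S.1 hu₀ne, ?_⟩
    intro u hu
    rcases eq_or_ne u 0 with rfl | hune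
    · simp
    · have hun : 0 < ‖u‖ := norm_pos_iff.2 hune
      have h1 : ‖u‖⁻¹ • u ∈ closure U ∩ Metric.sphere (0 : V) 1 := by
        refine ⟨hclsmul _ (by positivity) u hu, ?_⟩
        simp [norm_smul, abs_of_pos (inv_pos.2 hun), inv_mul_cancel₀ (ne_of_gt hun)]
      have h2 : φ u₀ ≤ φ (‖u‖⁻¹ • u) := hu₀min h1
      rw [map_smul, smul_eq_mul, ← div_eq_inv_mul, le_div_iff₀ hun] at h2
      linarith
  -- a ball around v inside U
  obtain ⟨r', hr'pos, hball⟩ := Metric.isOpen_iff.1 hUopen v hv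
  set r : ℝ := r' / 2 with hrdef
  have hrpos : 0 < r := by positivity
  have hrmem : ∀ x : V, ‖x‖ ≤ 1 → v + r • x ∈ U := by
    intro x hx
    apply hball
    rw [Metric.mem_ball, dist_eq_norm, add_sub_cancel_left, norm_smul,
      Real.norm_eq_abs, abs_of_pos hrpos]
    nlinarith
  -- extract a bounded subsequence
  have hfreq : ∃ C : ℝ, ∃ᶠ k in atTop, ‖(h k) v‖ < C := by
    by_contra hno
    push_neg at hno
    apply hcon
    rw [tendsto_atTop]
    intro b
    have := hno b
    simp only [← not_lt] at this
    filter_upwards [this] with k hk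
    exact not_lt.1 hk
  obtain ⟨C, hCf⟩ := hfreq
  obtain ⟨ψ, hψmono, hψ⟩ := Filter.extraction_of_frequently_atTop hCf
  have hCpos : 0 < C := lt_of_le_of_lt (norm_nonneg _) (hψ 0)
  set Φ : V →L[ℝ] ℝ := LinearMap.toContinuousLinearMap φ with hΦdef
  have hΦeq : ∀ x : V, φ x = Φ x := fun x => rfl
  set B : ℝ := ‖Φ‖ * C with hBdef
  have hBnonneg : 0 ≤ B := mul_nonneg (norm_nonneg _) hCpos.le
  have hB : ∀ n, φ ((h (ψ n)) v) ≤ B := by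
    intro n
    calc φ ((h (ψ n)) v) ≤ |φ ((h (ψ n)) v)| := le_abs_self _
      _ = ‖Φ ((h (ψ n)) v)‖ := by rw [hΦeq]; rfl
      _ ≤ ‖Φ‖ * ‖(h (ψ n)) v‖ := Φ.le_opNorm _
      _ ≤ ‖Φ‖ * C := mul_le_mul_of_nonneg_left (hψ n).le (norm_nonneg _)
  -- uniform operator-norm bound along the subsequence
  set M : ℝ := (2 * B / ε + C) / r with hMdef
  have hMpos : 0 < M := by positivity
  have hM : ∀ n, ∀ x : V, ‖(h (ψ n)) x‖ ≤ M * ‖x‖ := by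
    intro n x
    rcases eq_or_ne x 0 with rfl | hxne
    · simp
    have hxn : 0 < ‖x‖ := norm_pos_iff.2 hxne
    set y : V := ‖x‖⁻¹ • x with hydef
    have hy : ‖y‖ = 1 := by
      simp [hydef, norm_smul, abs_of_pos (inv_pos.2 hxn), inv_mul_cancel₀ (ne_of_gt hxn)]
    have h1 : v + r • y ∈ U := hrmem y hy.le
    have h2 : v - r • y ∈ U := by
      have := hrmem (-y) (by simp [hy])
      simpa [smul_neg, sub_eq_add_neg] using this
    have ha : 0 ≤ φ ((h (ψ n)) (v + r • y)) :=
      hφ0 _ (hmapcl _ _ (subset_closure h1))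
    have hb : 0 ≤ φ ((h (ψ n)) (v - r • y)) :=
      hφ0 _ (hmapcl _ _ (subset_closure h2))
    have hsum : φ ((h (ψ n)) (v + r • y)) + φ ((h (ψ n)) (v - r • y))
        = 2 * φ ((h (ψ n)) v) := by
      rw [← map_add, ← map_add]
      have hvv : (v + r • y) + (v - r • y) = (2 : ℝ) • v := by module
      rw [hvv, map_smul, map_smul, smul_eq_mul]
    have hub : φ ((h (ψ n)) (v + r • y)) ≤ 2 * B := by
      have := hB n; linarith
    have hn1 : ε * ‖(h (ψ n)) (v + r • y)‖ ≤ 2 * B :=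
      le_trans (hε _ (hmapcl _ _ (subset_closure h1))) hub
    have hn2 : ‖(h (ψ n)) (v + r • y)‖ ≤ 2 * B / ε := by
      rw [le_div_iff₀ hεpos]; linarith
    have hn3 : ‖(h (ψ n)) (r • y)‖ ≤ 2 * B / ε + C := by
      have heq : (h (ψ n)) (r • y) = (h (ψ n)) (v + r • y) - (h (ψ n)) v := by
        rw [← map_sub]; congr 1; abel
      rw [heq]
      calc ‖(h (ψ n)) (v + r • y) - (h (ψ n)) v‖
          ≤ ‖(h (ψ n)) (v + r • y)‖ + ‖(h (ψ n)) v‖ := norm_sub_le _ _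
        _ ≤ 2 * B / ε + C := add_le_add hn2 (hψ n).le
    have hn4 : ‖(h (ψ n)) y‖ ≤ M := by
      rw [map_smul, norm_smul, Real.norm_eq_abs, abs_of_pos hrpos] at hn3
      rw [hMdef, le_div_iff₀ hrpos]
      linarith [hn3]
    have hx : x = ‖x‖ • y := by
      rw [hydef, smul_smul, mul_inv_cancel₀ (ne_of_gt hxn), one_smul]
    calc ‖(h (ψ n)) x‖ = ‖(h (ψ n)) (‖x‖ • y)‖ := by rw [← hx]
      _ = ‖x‖ * ‖(h (ψ n)) y‖ := by
          rw [map_smul, norm_smul, Real.norm_eq_abs, abs_of_pos hxn]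
      _ ≤ ‖x‖ * M := mul_le_mul_of_nonneg_left hn4 hxn.le
      _ = M * ‖x‖ := mul_comm _ _
  -- the subsequence of operators lives in a compact ball
  set f : ℕ → (V →L[ℝ] V) :=
    fun n => LinearMap.toContinuousLinearMap ((h (ψ n)) : V →ₗ[ℝ] V) with hfdef
  have hfapp : ∀ n x, f n x = (h (ψ n)) x := fun n x => rfl
  have hfmem : ∀ n, f n ∈ Metric.closedBall (0 : V →L[ℝ] V) M := by
    intro n
    rw [Metric.mem_closedBall, dist_zero_right]
    exact ContinuousLinearMap.opNorm_le_bound _ hMpos.le (fun x => by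
      rw [hfapp]; exact hM n x)
  obtain ⟨g, hgmem, θ, hθmono, hθ⟩ :=
    tendsto_subseq_of_bounded Metric.isBounded_closedBall hfmem
  -- extract convergence of the norms as well
  obtain ⟨c, hcmem, σ, hσmono, hσ⟩ :=
    (isCompact_Icc (a := (0:ℝ)) (b := C)).tendsto_subseq
      (x := fun n => ‖(h (ψ (θ n))) v‖) (fun n => ⟨norm_nonneg _, (hψ (θ n)).le⟩)
  set ρ : ℕ → ℕ := fun n => ψ (θ (σ n)) with hρdef
  have hρmono : StrictMono ρ := hψmono.comp (hθmono.comp hσmono)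
  have hgconv : Tendsto (fun n => f (θ (σ n))) atTop (𝓝 g) :=
    hθ.comp hσmono.tendsto_atTop
  have hnormconv : Tendsto (fun n => ‖(h (ρ n)) v‖) atTop (𝓝 c) := hσ
  -- pointwise convergence to g
  have hgx : ∀ x : V, Tendsto (fun n => (h (ρ n)) x) atTop (𝓝 (g x)) := by
    intro x
    have := ((ContinuousLinearMap.apply ℝ V x).continuous.tendsto g).comp hgconv
    simpa [Function.comp_def, hfapp, hρdef] using this
  -- the limit has determinant 1
  have hdetg : LinearMap.det (g : V →ₗ[ℝ] V) = 1 := by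
    have hcont := (ContinuousLinearMap.continuous_det (E := V) (𝕜 := ℝ)).tendsto g
    have h1 : Tendsto (fun n => (f (θ (σ n))).det) atTop (𝓝 g.det) :=
      hcont.comp hgconv
    have h2 : ∀ n, (f (θ (σ n))).det = 1 := by
      intro n
      have : ((f (θ (σ n))) : V →ₗ[ℝ] V) = ((h (ψ (θ (σ n)))) : V →ₗ[ℝ] V) :=
        LinearMap.coe_toContinuousLinearMap _
      rw [ContinuousLinearMap.det, this, hdet]
    rw [tendsto_congr h2] at h1
    exact tendsto_nhds_unique h1 tendsto_const_nhds
  have hdetgne : LinearMap.det (g : V →ₗ[ℝ] V) ≠ 0 := by rw [hdetg]; exact one_ne_zero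
  -- g maps U into the closure of U
  have hgcl : ∀ u ∈ U, g u ∈ closure U := by
    intro u hu
    refine mem_closure_of_tendsto (hgx u) (Filter.Eventually.of_forall fun n => ?_)
    exact (hU (ρ n)) ▸ ⟨u, hu, rfl⟩
  -- interior of closure of U is U
  have hintcl : interior (closure U) ⊆ U := by
    intro x hx
    rcases eq_or_ne x v with rfl | hxv
    · exact hv
    obtain ⟨δ, hδpos, hδ⟩ := Metric.isOpen_iff.1 isOpen_interior x hx
    have hxvn : 0 < ‖x - v‖ := by
      rw [norm_pos_iff]; exact sub_ne_zero.2 hxv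
    set t : ℝ := δ / (2 * ‖x - v‖) with htdef
    have htpos : 0 < t := by positivity
    have hz : x + t • (x - v) ∈ closure U := by
      refine interior_subset (hδ ?_)
      rw [Metric.mem_ball, dist_eq_norm, add_sub_cancel_left, norm_smul,
        Real.norm_eq_abs, abs_of_pos htpos]
      have heq : t * ‖x - v‖ = δ / 2 := by rw [htdef]; field_simp
      rw [heq]; linarith
    have hvint : v ∈ interior U := by rwa [hUopen.interior_eq]
    have h1t : (0:ℝ) < 1 + t := by linarith
    have hcombo := hUconv.combo_interior_closure_mem_interior hvint hz
      (a := t / (1 + t)) (b := 1 / (1 + t)) (by positivity) (by positivity)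
      (by field_simp; ring)
    have hxeq : (t / (1 + t)) • v + (1 / (1 + t)) • (x + t • (x - v)) = x := by
      match_scalars <;> field_simp <;> ring
    rw [hxeq, hUopen.interior_eq] at hcombo
    exact hcombo
  -- g maps U into U
  have hgU : ∀ u ∈ U, g u ∈ U := by
    set G : V ≃ₗ[ℝ] V := LinearMap.equivOfDetNeZero (g : V →ₗ[ℝ] V) hdetgne with hGdef
    have hGg : ∀ x : V, G x = g x := fun x => rfl
    have hGopen : IsOpen (G '' U) :=
      G.toContinuousLinearEquiv.toHomeomorph.isOpenMap U hUopen
    have hGcl : G '' U ⊆ closure U := by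
      rintro _ ⟨u, hu, rfl⟩
      rw [hGg]
      exact hgcl u hu
    have hGsub : G '' U ⊆ U := (interior_maximal hGcl hGopen).trans hintcl
    intro u hu
    have := hGsub ⟨u, hu, rfl⟩
    rwa [hGg] at this
  -- identify g v with c • w
  have hgv2 : Tendsto (fun n => (h (ρ n)) v) atTop (𝓝 (c • w)) := by
    have hlim' : Tendsto (fun n => ‖(h (ρ n)) v‖⁻¹ • (h (ρ n)) v) atTop (𝓝 w) :=
      hlim.comp hρmono.tendsto_atTop
    have hprod := hnormconv.smul hlim'
    have heq : ∀ n, ‖(h (ρ n)) v‖ • ‖(h (ρ n)) v‖⁻¹ • (h (ρ n)) v = (h (ρ n)) v := by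
      intro n
      rw [smul_smul, mul_inv_cancel₀ (hhvne (ρ n)), one_smul]
    rwa [tendsto_congr heq] at hprod
  have hgvcw : g v = c • w := tendsto_nhds_unique (hgx v) hgv2
  have hgvU : g v ∈ U := hgU v hv
  have hgvne : g v ≠ 0 := fun hh => h0U (hh ▸ hgvU)
  have hcne : c ≠ 0 := by
    rintro rfl
    rw [zero_smul] at hgvcw
    exact hgvne hgvcw
  have hcpos : 0 < c := lt_of_le_of_ne hcmem.1 (Ne.symm hcne)
  have hwU' : w ∈ U := by
    have := hUcone c⁻¹ (inv_pos.2 hcpos) _ hgvU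
    rwa [hgvcw, smul_smul, inv_mul_cancel₀ hcne, one_smul] at this
  exact hwnU hwU'
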